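/- If a metric space X is the union of two subsets Y and Z, then dim_N X = max(dim_N Y, dim_N Z). -/

import Mathlib

open Metric Set

/-
The proof goes through colored covers: `dim_N ≤ n` iff for some `c` and every `s > 0`
there are `n + 1` families of sets of diameter `≤ c s` covering the space, each family
consisting of pairwise `s`-apart sets. A cover of multiplicity `≤ n + 1` at scale
`2 (n + 1) s` is turned into one by labelling each point `x` with the first `k ≤ n` at which the
members meeting the ball `B(x, k s)` stop changing (pigeonhole), and grouping points by this
label and that set of members. For `X = Y ∪ Z`, color `Y` at scale `s` and `Z` at a much
coarser scale, and in each color let every `Z`-set absorb the `Y`-sets within `s` of it.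
The reverse inequality is monotonicity under isometric embeddings.
-/

/-- `X` has Nagata dimension at most `n` (witnessed by some constant `c > 0`):
for every `s > 0` there is a covering by sets of diameter `≤ c * s` such that every
set of diameter `≤ s` meets at most `n + 1` members of the covering. -/
def NagataProp (X : Type*) [MetricSpace X] (n : ℕ) : Prop :=
  ∃ c : ℝ, 0 < c ∧ ∀ s : ℝ, 0 < s → ∃ 𝓑 : Set (Set X),
    (⋃₀ 𝓑 = univ) ∧
    (∀ B ∈ 𝓑, EMetric.diam B ≤ ENNReal.ofReal (c * s)) ∧
    (∀ E : Set X, EMetric.diam E ≤ ENNReal.ofReal s →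
      ∃ T : Finset (Set X), T.card ≤ n + 1 ∧
        ∀ B ∈ 𝓑, (B ∩ E).Nonempty → B ∈ T)

/-- The Nagata (Assouad–Nagata) dimension of a metric space, as an element of `ℕ∞`. -/
noncomputable def nagataDim (X : Type*) [MetricSpace X] : ℕ∞ :=
  sInf {k : ℕ∞ | ∃ n : ℕ, k = n ∧ NagataProp X n}

section Colored

variable {X : Type*} [PseudoMetricSpace X] {ι : Type*} {s D : ℝ}

theorem dist_le_of_ediam_le_ofReal {A : Set X} (hD : 0 ≤ D) (h : ediam A ≤ ENNReal.ofReal D)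
    {x y : X} (hx : x ∈ A) (hy : y ∈ A) : dist x y ≤ D :=
  (edist_le_ofReal hD).1 ((edist_le_ediam_of_mem hx hy).trans h)

def Apart (s : ℝ) (A B : Set X) : Prop :=
  ∀ a ∈ A, ∀ b ∈ B, s ≤ dist a b

theorem Apart.symm {A B : Set X} (h : Apart s A B) : Apart s B A :=
  fun b hb a ha => (h a ha b hb).trans_eq (dist_comm a b)

theorem not_apart_iff {A B : Set X} : ¬Apart s A B ↔ ∃ a ∈ A, ∃ b ∈ B, dist a b < s := by
  simp [Apart]

structure IsColoredCover (Y : Set X) (𝓒 : ι → Set (Set X)) (D s : ℝ) : Prop where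
  exists_mem : ∀ y ∈ Y, ∃ i, ∃ A ∈ 𝓒 i, y ∈ A
  ediam_le : ∀ i, ∀ A ∈ 𝓒 i, ediam A ≤ ENNReal.ofReal D
  pairwise_apart : ∀ i, (𝓒 i).Pairwise (Apart s)

def HasColoredCovers (Y : Set X) (n : ℕ) : Prop :=
  ∃ c : ℝ, 0 < c ∧ ∀ s : ℝ, 0 < s →
    ∃ 𝓒 : Fin (n + 1) → Set (Set X), IsColoredCover Y 𝓒 (c * s) s

theorem IsColoredCover.exists_finset_of_dist_lt [Fintype ι] {Y : Set X} {𝓒 : ι → Set (Set X)}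
    (h : IsColoredCover Y 𝓒 D s) {E : Set X} (hE : ∀ x ∈ E, ∀ y ∈ E, dist x y < s) :
    ∃ T : Finset (Set X), T.card ≤ Fintype.card ι ∧
      ∀ i, ∀ B ∈ 𝓒 i, (B ∩ E).Nonempty → B ∈ T := by
  have hsub : ∀ i, {B ∈ 𝓒 i | (B ∩ E).Nonempty}.Subsingleton := by
    rintro i B ⟨hB, x, hxB, hxE⟩ B' ⟨hB', y, hyB', hyE⟩
    by_contra hne
    exact (h.pairwise_apart i hB hB' hne x hxB y hyB').not_gt (hE x hxE y hyE)
  have hpick : ∀ i, ∃ B₀, {B ∈ 𝓒 i | (B ∩ E).Nonempty} ⊆ {B₀} := fun i =>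
    (hsub i).eq_empty_or_singleton.elim (fun h => ⟨∅, h ▸ empty_subset _⟩)
      fun ⟨B₀, h⟩ => ⟨B₀, h.subset⟩
  choose pick hpick using hpick
  exact ⟨Finset.univ.image pick, Finset.card_image_le.trans Finset.card_univ.le,
    fun i B hB hBE => Finset.mem_image.2 ⟨i, Finset.mem_univ i, (hpick i ⟨hB, hBE⟩).symm⟩⟩

theorem IsColoredCover.image {W : Type*} [PseudoMetricSpace W] {f : W → X} (hf : Isometry f)
    {S : Set W} {𝓒 : ι → Set (Set W)} (h : IsColoredCover S 𝓒 D s) :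
    IsColoredCover (f '' S) (fun i => image f '' 𝓒 i) D s where
  exists_mem := by
    rintro _ ⟨x, hx, rfl⟩
    obtain ⟨i, A, hA, hxA⟩ := h.exists_mem x hx
    exact ⟨i, f '' A, mem_image_of_mem _ hA, mem_image_of_mem f hxA⟩
  ediam_le := by
    rintro i _ ⟨A, hA, rfl⟩
    exact (hf.ediam_image A).trans_le (h.ediam_le i A hA)
  pairwise_apart := by
    rintro i _ ⟨A, hA, rfl⟩ _ ⟨A', hA', rfl⟩ hne _ ⟨x, hx, rfl⟩ _ ⟨y, hy, rfl⟩
    rw [hf.dist_eq]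
    exact h.pairwise_apart i hA hA' (fun hAA' => hne (hAA' ▸ rfl)) x hx y hy

theorem HasColoredCovers.range_of_isometry {W : Type*} [PseudoMetricSpace W] {f : W → X}
    (hf : Isometry f) {n : ℕ} (h : HasColoredCovers (univ : Set W) n) :
    HasColoredCovers (range f) n := by
  obtain ⟨c, hc, H⟩ := h
  refine ⟨c, hc, fun s hs => ?_⟩
  obtain ⟨𝓒, h𝓒⟩ := H s hs
  exact ⟨_, image_univ (f := f) ▸ h𝓒.image hf⟩

theorem isColoredCover_fibers {β : Type*} (φ : X → ι × β)
    (hdiam : ∀ x y, φ x = φ y → dist x y ≤ D)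
    (hsep : ∀ x y, (φ x).1 = (φ y).1 → dist x y < s → φ x = φ y) :
    IsColoredCover univ (fun i => range fun b => φ ⁻¹' {(i, b)}) D s where
  exists_mem x _ := ⟨(φ x).1, _, mem_range_self (φ x).2, rfl⟩
  ediam_le := by
    rintro i _ ⟨b, rfl⟩
    exact ediam_le_of_forall_dist_le fun x hx y hy => hdiam x y (hx.trans hy.symm)
  pairwise_apart := by
    rintro i _ ⟨b, rfl⟩ _ ⟨b', rfl⟩ hne x hx y hy
    by_contra! hlt
    have hxy := hsep x y (by rw [mem_preimage.1 hx, mem_preimage.1 hy]) hlt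
    rw [mem_preimage.1 hx, mem_preimage.1 hy] at hxy
    exact hne (by rw [(Prod.mk.inj hxy).2])

end Colored

section Absorb

variable {X : Type*} [PseudoMetricSpace X] {ι : Type*} {s S D₁ D₂ : ℝ}

def enlarge (s : ℝ) (𝓤 : Set (Set X)) (V : Set X) : Set X :=
  V ∪ ⋃₀ {U ∈ 𝓤 | ¬Apart s U V}

def absorb (s : ℝ) (𝓤 𝓥 : Set (Set X)) : Set (Set X) :=
  enlarge s 𝓤 '' 𝓥 ∪ {U ∈ 𝓤 | ∀ V ∈ 𝓥, Apart s U V}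

variable {𝓤 𝓥 : Set (Set X)}

theorem exists_dist_le_of_mem_enlarge (hD₁ : 0 ≤ D₁) (hs : 0 ≤ s)
    (h𝓤 : ∀ U ∈ 𝓤, ediam U ≤ ENNReal.ofReal D₁) {V : Set X} {x : X}
    (hx : x ∈ enlarge s 𝓤 V) : ∃ v ∈ V, dist x v ≤ D₁ + s := by
  rcases hx with hxV | ⟨U, ⟨hU, hUV⟩, hxU⟩
  · exact ⟨x, hxV, by rw [dist_self]; positivity⟩
  · obtain ⟨u, hu, v, hv, huv⟩ := not_apart_iff.1 hUV
    exact ⟨v, hv, (dist_triangle x u v).trans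
      (add_le_add (dist_le_of_ediam_le_ofReal hD₁ (h𝓤 U hU) hxU hu) huv.le)⟩

theorem ediam_enlarge_le (hD₁ : 0 ≤ D₁) (hD₂ : 0 ≤ D₂) (hs : 0 ≤ s)
    (h𝓤 : ∀ U ∈ 𝓤, ediam U ≤ ENNReal.ofReal D₁) {V : Set X}
    (hV : ediam V ≤ ENNReal.ofReal D₂) :
    ediam (enlarge s 𝓤 V) ≤ ENNReal.ofReal (D₂ + 2 * (D₁ + s)) := by
  refine ediam_le_of_forall_dist_le fun x hx y hy => ?_
  obtain ⟨v, hv, hxv⟩ := exists_dist_le_of_mem_enlarge hD₁ hs h𝓤 hx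
  obtain ⟨v', hv', hyv'⟩ := exists_dist_le_of_mem_enlarge hD₁ hs h𝓤 hy
  have hvv' := dist_le_of_ediam_le_ofReal hD₂ hV hv hv'
  linarith [dist_triangle4 x v v' y, dist_comm v' y]

theorem apart_enlarge_enlarge (hD₁ : 0 ≤ D₁) (hs : 0 ≤ s)
    (h𝓤 : ∀ U ∈ 𝓤, ediam U ≤ ENNReal.ofReal D₁) (hS : 2 * (D₁ + s) + s ≤ S) {V V' : Set X}
    (hVV' : Apart S V V') : Apart s (enlarge s 𝓤 V) (enlarge s 𝓤 V') := by
  intro x hx y hy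
  obtain ⟨v, hv, hxv⟩ := exists_dist_le_of_mem_enlarge hD₁ hs h𝓤 hx
  obtain ⟨v', hv', hyv'⟩ := exists_dist_le_of_mem_enlarge hD₁ hs h𝓤 hy
  linarith [hVV' v hv v' hv', dist_triangle4 v x y v', dist_comm v x]

theorem apart_enlarge_of_apart (h𝓤 : 𝓤.Pairwise (Apart s)) {U' V : Set X} (hU' : U' ∈ 𝓤)
    (hU'V : Apart s U' V) : Apart s (enlarge s 𝓤 V) U' := by
  rintro x (hxV | ⟨U, ⟨hU, hUV⟩, hxU⟩)
  · exact hU'V.symm x hxV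
  · exact h𝓤 hU hU' (by rintro rfl; exact hUV hU'V) x hxU

theorem subset_sUnion_absorb : ⋃₀ 𝓤 ∪ ⋃₀ 𝓥 ⊆ ⋃₀ absorb s 𝓤 𝓥 := by
  rintro x (⟨U, hU, hxU⟩ | ⟨V, hV, hxV⟩)
  · by_cases hfar : ∀ V ∈ 𝓥, Apart s U V
    · exact ⟨U, Or.inr ⟨hU, hfar⟩, hxU⟩
    · obtain ⟨V, hV, hUV⟩ := not_forall₂.1 hfar
      exact ⟨enlarge s 𝓤 V, Or.inl (mem_image_of_mem _ hV), Or.inr ⟨U, ⟨hU, hUV⟩, hxU⟩⟩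
  · exact ⟨enlarge s 𝓤 V, Or.inl (mem_image_of_mem _ hV), Or.inl hxV⟩

theorem ediam_le_of_mem_absorb (hD₁ : 0 ≤ D₁) (hD₂ : 0 ≤ D₂) (hs : 0 ≤ s)
    (h𝓤 : ∀ U ∈ 𝓤, ediam U ≤ ENNReal.ofReal D₁) (h𝓥 : ∀ V ∈ 𝓥, ediam V ≤ ENNReal.ofReal D₂) :
    ∀ W ∈ absorb s 𝓤 𝓥, ediam W ≤ ENNReal.ofReal (D₂ + 2 * (D₁ + s)) := by
  rintro W (⟨V, hV, rfl⟩ | ⟨hW, -⟩)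
  · exact ediam_enlarge_le hD₁ hD₂ hs h𝓤 (h𝓥 V hV)
  · exact (h𝓤 W hW).trans (ENNReal.ofReal_le_ofReal (by linarith))

theorem pairwise_apart_absorb (hD₁ : 0 ≤ D₁) (hs : 0 ≤ s)
    (h𝓤 : ∀ U ∈ 𝓤, ediam U ≤ ENNReal.ofReal D₁) (h𝓤s : 𝓤.Pairwise (Apart s))
    (h𝓥S : 𝓥.Pairwise (Apart S)) (hS : 2 * (D₁ + s) + s ≤ S) :
    (absorb s 𝓤 𝓥).Pairwise (Apart s) := by
  rintro W (⟨V, hV, rfl⟩ | ⟨hU, hUfar⟩) W' (⟨V', hV', rfl⟩ | ⟨hU', hU'far⟩) hne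
  · exact apart_enlarge_enlarge hD₁ hs h𝓤 hS (h𝓥S hV hV' fun h => hne (h ▸ rfl))
  · exact apart_enlarge_of_apart h𝓤s hU' (hU'far V hV)
  · exact (apart_enlarge_of_apart h𝓤s hU (hUfar V' hV')).symm
  · exact h𝓤s hU hU' hne

theorem IsColoredCover.union {Y Z : Set X} {𝓤 𝓥 : ι → Set (Set X)}
    (hY : IsColoredCover Y 𝓤 D₁ s) (hZ : IsColoredCover Z 𝓥 D₂ S)
    (hD₁ : 0 ≤ D₁) (hD₂ : 0 ≤ D₂) (hs : 0 ≤ s) (hS : 2 * (D₁ + s) + s ≤ S) :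
    IsColoredCover (Y ∪ Z) (fun i => absorb s (𝓤 i) (𝓥 i)) (D₂ + 2 * (D₁ + s)) s where
  exists_mem := by
    rintro x (hx | hx)
    · obtain ⟨i, U, hU, hxU⟩ := hY.exists_mem x hx
      exact ⟨i, mem_sUnion.1 (subset_sUnion_absorb (Or.inl ⟨U, hU, hxU⟩))⟩
    · obtain ⟨i, V, hV, hxV⟩ := hZ.exists_mem x hx
      exact ⟨i, mem_sUnion.1 (subset_sUnion_absorb (Or.inr ⟨V, hV, hxV⟩))⟩
  ediam_le i := ediam_le_of_mem_absorb hD₁ hD₂ hs (hY.ediam_le i) (hZ.ediam_le i)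
  pairwise_apart i :=
    pairwise_apart_absorb hD₁ hs (hY.ediam_le i) (hY.pairwise_apart i) (hZ.pairwise_apart i) hS

theorem HasColoredCovers.union {Y Z : Set X} {n : ℕ} (hY : HasColoredCovers Y n)
    (hZ : HasColoredCovers Z n) : HasColoredCovers (Y ∪ Z) n := by
  obtain ⟨cY, hcY, HY⟩ := hY
  obtain ⟨cZ, hcZ, HZ⟩ := hZ
  refine ⟨cZ * (2 * cY + 3) + 2 * (cY + 1), by positivity, fun s hs => ?_⟩
  obtain ⟨𝓤, h𝓤⟩ := HY s hs
  -- `Z` is colored at the coarser scale `(2 cY + 3) s`, so that its sets stay `s`-apart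
  -- after each one absorbs the `cY s`-sets of `Y` that come within `s` of it.
  obtain ⟨𝓥, h𝓥⟩ := HZ ((2 * cY + 3) * s) (by positivity)
  have h𝓦 := h𝓤.union h𝓥 (by positivity) (by positivity) hs.le (by linarith)
  exact ⟨_, by convert h𝓦 using 2; ring⟩

end Absorb

theorem Set.exists_lt_eq_succ_of_monotone {α : Type*} {σ : ℕ → Set α} (hσ : Monotone σ)
    (h0 : (σ 0).Nonempty) {m : ℕ} {T : Finset α} (hT : σ m ⊆ T) (hcard : T.card ≤ m) :
    ∃ k < m, σ k = σ (k + 1) := by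
  by_contra! hne
  have hfin : ∀ k ≤ m, (σ k).Finite := fun k hk => T.finite_toSet.subset ((hσ hk).trans hT)
  have hgrow : ∀ k ≤ m, k + 1 ≤ (σ k).ncard := by
    intro k hk
    induction k with
    | zero => exact (ncard_pos (hfin 0 hk)).2 h0
    | succ k ih =>
      exact (ih (by omega)).trans_lt <| ncard_lt_ncard
        ((hσ k.le_succ).ssubset_of_ne (hne k (by omega))) (hfin _ hk)
  have := (hgrow m le_rfl).trans ((ncard_le_ncard hT).trans_eq (ncard_coe_finset T))
  omega

section MembersNear

variable {X : Type*} [PseudoMetricSpace X] {𝓑 : Set (Set X)} {s D : ℝ}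

def membersNear (𝓑 : Set (Set X)) (r : ℝ) (x : X) : Set (Set X) :=
  {B ∈ 𝓑 | (B ∩ closedBall x r).Nonempty}

theorem membersNear_subset {r r' : ℝ} {x y : X} (h : r + dist x y ≤ r') :
    membersNear 𝓑 r x ⊆ membersNear 𝓑 r' y :=
  fun _ ⟨hB, hBx⟩ => ⟨hB, hBx.mono (inter_subset_inter_right _ (closedBall_subset_closedBall' h))⟩

theorem membersNear_nonempty (hcov : ⋃₀ 𝓑 = univ) {r : ℝ} (hr : 0 ≤ r) (x : X) :
    (membersNear 𝓑 r x).Nonempty := by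
  obtain ⟨B, hB, hxB⟩ := mem_sUnion.1 (hcov ▸ mem_univ x)
  exact ⟨B, hB, x, hxB, mem_closedBall_self hr⟩

theorem exists_membersNear_eq_succ (hcov : ⋃₀ 𝓑 = univ) (hs : 0 ≤ s) {n : ℕ} (x : X)
    {T : Finset (Set X)} (hT : membersNear 𝓑 ((n + 1) * s) x ⊆ T) (hcard : T.card ≤ n + 1) :
    ∃ k : Fin (n + 1), membersNear 𝓑 (k * s) x = membersNear 𝓑 ((k + 1) * s) x := by
  have hmono : Monotone fun k : ℕ => membersNear 𝓑 (k * s) x := fun k l hkl =>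
    membersNear_subset (by rw [dist_self, add_zero]; gcongr)
  obtain ⟨k, hk, hstable⟩ := exists_lt_eq_succ_of_monotone hmono
    (membersNear_nonempty hcov (by simp) x) (m := n + 1) (by exact_mod_cast hT) hcard
  exact ⟨⟨k, hk⟩, by exact_mod_cast hstable⟩

theorem exists_isColoredCover_of_membersNear {n : ℕ} (hcov : ⋃₀ 𝓑 = univ) (hD : 0 ≤ D)
    (hdiam : ∀ B ∈ 𝓑, ediam B ≤ ENNReal.ofReal D) (hs : 0 ≤ s)
    (hmult : ∀ x, ∃ T : Finset (Set X), T.card ≤ n + 1 ∧ membersNear 𝓑 ((n + 1) * s) x ⊆ T) :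
    ∃ 𝓒 : Fin (n + 1) → Set (Set X), IsColoredCover univ 𝓒 (D + 2 * n * s) s := by
  have hstable : ∀ x, ∃ k : Fin (n + 1), membersNear 𝓑 (k * s) x = membersNear 𝓑 ((k + 1) * s) x :=
    fun x => let ⟨T, hcard, hT⟩ := hmult x; exists_membersNear_eq_succ hcov hs x hT hcard
  choose κ hκ using hstable
  have hκn : ∀ x, (κ x : ℝ) * s ≤ n * s := fun x => by
    gcongr; exact_mod_cast Nat.lt_succ_iff.1 (κ x).isLt
  refine ⟨_, isColoredCover_fibers (fun x => (κ x, membersNear 𝓑 (κ x * s) x)) ?_ ?_⟩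
  · intro x y hxy
    obtain ⟨hk, hN⟩ := Prod.mk.inj hxy
    obtain ⟨B, hB, b, hbB, hxb⟩ := membersNear_nonempty hcov (by positivity) (r := κ x * s) x
    obtain ⟨-, b', hb'B, hyb'⟩ : B ∈ membersNear 𝓑 (κ y * s) y := by
      rw [← hN]; exact ⟨hB, b, hbB, hxb⟩
    have hbb' := dist_le_of_ediam_le_ofReal hD (hdiam B hB) hbB hb'B
    linarith [dist_triangle4 x b b' y, mem_closedBall'.1 hxb, mem_closedBall.1 hyb',
      hκn x, hκn y, dist_comm b' y]
  · intro x y (hk : κ x = κ y) hxy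
    have hnear : ∀ x y, κ x = κ y → dist x y < s →
        membersNear 𝓑 (κ x * s) x ⊆ membersNear 𝓑 (κ y * s) y := fun x y hk hxy => by
      rw [hκ y, ← hk]
      exact membersNear_subset (by linarith)
    exact Prod.ext hk (subset_antisymm (hnear x y hk hxy) (hnear y x hk.symm (dist_comm x y ▸ hxy)))

end MembersNear

section Nagata

variable {X : Type*} [MetricSpace X] {n : ℕ}

theorem NagataProp.mono {m : ℕ} (h : NagataProp X n) (hnm : n ≤ m) : NagataProp X m := by
  obtain ⟨c, hc, H⟩ := h
  refine ⟨c, hc, fun s hs => ?_⟩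
  obtain ⟨𝓑, hcov, hdiam, hmult⟩ := H s hs
  refine ⟨𝓑, hcov, hdiam, fun E hE => ?_⟩
  obtain ⟨T, hT, hTE⟩ := hmult E hE
  exact ⟨T, hT.trans (by omega), hTE⟩

theorem NagataProp.of_isometry {W : Type*} [MetricSpace W] {f : W → X} (hf : Isometry f)
    (h : NagataProp X n) : NagataProp W n := by
  obtain ⟨c, hc, H⟩ := h
  refine ⟨c, hc, fun s hs => ?_⟩
  obtain ⟨𝓑, hcov, hdiam, hmult⟩ := H s hs
  refine ⟨preimage f '' 𝓑, ?_, ?_, fun E hE => ?_⟩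
  · rw [sUnion_image, ← preimage_iUnion₂, ← sUnion_eq_biUnion, hcov, preimage_univ]
  · rintro _ ⟨B, hB, rfl⟩
    calc ediam (f ⁻¹' B) = ediam (f '' (f ⁻¹' B)) := (hf.ediam_image _).symm
      _ ≤ ediam B := ediam_mono (image_preimage_subset f B)
      _ ≤ _ := hdiam B hB
  · obtain ⟨T, hT, hTE⟩ := hmult (f '' E) ((hf.ediam_image E).trans_le hE)
    refine ⟨T.image (preimage f), Finset.card_image_le.trans hT, ?_⟩
    rintro _ ⟨B, hB, rfl⟩ ⟨x, hxB, hxE⟩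
    exact Finset.mem_image_of_mem _ (hTE B hB ⟨f x, hxB, mem_image_of_mem f hxE⟩)

theorem NagataProp.hasColoredCovers (h : NagataProp X n) : HasColoredCovers (univ : Set X) n := by
  obtain ⟨c, hc, H⟩ := h
  refine ⟨c * (2 * (n + 1)) + 2 * n, by positivity, fun s hs => ?_⟩
  obtain ⟨𝓑, hcov, hdiam, hmult⟩ := H (2 * (n + 1) * s) (by positivity)
  have hball : ∀ x : X, ediam (closedBall x ((n + 1) * s)) ≤ ENNReal.ofReal (2 * (n + 1) * s) :=
    fun x => ediam_le_of_forall_dist_le fun a ha b hb => by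
      linarith [dist_triangle_right a b x, mem_closedBall.1 ha, mem_closedBall.1 hb]
  obtain ⟨𝓒, h𝓒⟩ := exists_isColoredCover_of_membersNear hcov (by positivity) hdiam hs.le
    fun x => let ⟨T, hT, hTE⟩ := hmult _ (hball x); ⟨T, hT, fun B hB => hTE B hB.1 hB.2⟩
  exact ⟨𝓒, by convert h𝓒 using 2; ring⟩

theorem HasColoredCovers.nagataProp (h : HasColoredCovers (univ : Set X) n) : NagataProp X n := by
  obtain ⟨c, hc, H⟩ := h
  refine ⟨2 * c, by positivity, fun s hs => ?_⟩
  obtain ⟨𝓒, h𝓒⟩ := H (2 * s) (by positivity)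
  refine ⟨⋃ i, 𝓒 i, eq_univ_of_forall fun x => ?_, ?_, fun E hE => ?_⟩
  · obtain ⟨i, A, hA, hxA⟩ := h𝓒.exists_mem x (mem_univ x)
    exact ⟨A, mem_iUnion.2 ⟨i, hA⟩, hxA⟩
  · simp only [mem_iUnion, forall_exists_index]
    exact fun B i hB => (h𝓒.ediam_le i B hB).trans_eq (by ring_nf)
  · obtain ⟨T, hT, hTE⟩ := h𝓒.exists_finset_of_dist_lt fun x hx y hy =>
      (dist_le_of_ediam_le_ofReal hs.le hE hx hy).trans_lt (by linarith)
    refine ⟨T, by simpa using hT, ?_⟩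
    simp only [mem_iUnion, forall_exists_index]
    exact fun B i hB => hTE i B hB

theorem NagataProp.of_union {Y Z : Set X} (hYZ : Y ∪ Z = univ) (hY : NagataProp Y n)
    (hZ : NagataProp Z n) : NagataProp X n := by
  have hY' := hY.hasColoredCovers.range_of_isometry isometry_subtype_coe
  have hZ' := hZ.hasColoredCovers.range_of_isometry isometry_subtype_coe
  rw [Subtype.range_coe] at hY' hZ'
  exact (hYZ ▸ hY'.union hZ').nagataProp

theorem nagataDim_le_of_nagataProp (h : NagataProp X n) : nagataDim X ≤ n :=
  sInf_le ⟨n, rfl, h⟩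

theorem nagataProp_toNat_nagataDim (h : nagataDim X ≠ ⊤) : NagataProp X (nagataDim X).toNat := by
  have hne : {k : ℕ∞ | ∃ n : ℕ, k = n ∧ NagataProp X n}.Nonempty :=
    nonempty_iff_ne_empty.2 fun hemp => h (by rw [nagataDim, hemp, sInf_empty])
  obtain ⟨n, hn, hP⟩ := csInf_mem hne
  rwa [nagataDim, hn, ENat.toNat_natCast]

theorem nagataDim_le_of_isometry {W : Type*} [MetricSpace W] {f : W → X} (hf : Isometry f) :
    nagataDim W ≤ nagataDim X :=
  le_sInf fun _ ⟨_, hk, hP⟩ => hk ▸ nagataDim_le_of_nagataProp (hP.of_isometry hf)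

theorem nagataDim_le_max_of_forall {Y Z : Type*} [MetricSpace Y] [MetricSpace Z]
    (h : ∀ n, NagataProp Y n → NagataProp Z n → NagataProp X n) :
    nagataDim X ≤ max (nagataDim Y) (nagataDim Z) := by
  rcases eq_or_ne (nagataDim Y) ⊤ with hY | hY
  · simp [hY]
  rcases eq_or_ne (nagataDim Z) ⊤ with hZ | hZ
  · simp [hZ]
  set m := max (nagataDim Y).toNat (nagataDim Z).toNat
  calc nagataDim X ≤ m := nagataDim_le_of_nagataProp <|
        h m ((nagataProp_toNat_nagataDim hY).mono (le_max_left _ _))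
          ((nagataProp_toNat_nagataDim hZ).mono (le_max_right _ _))
    _ = max (nagataDim Y) (nagataDim Z) := by
        rw [Nat.mono_cast.map_max, ENat.natCast_toNat hY, ENat.natCast_toNat hZ]

end Nagata

theorem nagataDim_union {X : Type*} [MetricSpace X] (Y Z : Set X) (hYZ : Y ∪ Z = univ) :
    nagataDim X = max (nagataDim Y) (nagataDim Z) :=
  le_antisymm (nagataDim_le_max_of_forall fun _ hY hZ => NagataProp.of_union hYZ hY hZ)
    (max_le (nagataDim_le_of_isometry isometry_subtype_coe)
      (nagataDim_le_of_isometry isometry_subtype_coe))
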